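/- Let {A, S, Π} be an S-node with S boundedly invertible, and let z ∈ ℂ be such that both I − zA* and I − z̄A* are boundedly invertible. Then the frame 𝔄(S,z) is an invertible 2p×2p matrix and 𝔄(S,z)^{−1} = J · 𝔄(S, z̄)* · J. -/

import Mathlib

open Matrix MeasureTheory ContinuousLinearMap
open scoped ComplexOrder

noncomputable section

/-- The matrix (in the standard basis) of a continuous linear operator on `ℂ^p`. -/
def opToMat {p : ℕ} (T : EuclideanSpace ℂ (Fin p) →L[ℂ] EuclideanSpace ℂ (Fin p)) :
    Matrix (Fin p) (Fin p) ℂ :=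
  (Matrix.toEuclideanCLM (𝕜 := ℂ) (n := Fin p)).symm T

/-- The `2p × 2p` matrix `Π^* B Π` with blocks `Φ_i^* B Φ_j`, for `Π = [Φ₁ Φ₂]`. -/
def sandwich {p : ℕ} {H : Type*} [NormedAddCommGroup H] [InnerProductSpace ℂ H]
    [CompleteSpace H] (B : H →L[ℂ] H) (Φ₁ Φ₂ : EuclideanSpace ℂ (Fin p) →L[ℂ] H) :
    Matrix (Fin p ⊕ Fin p) (Fin p ⊕ Fin p) ℂ :=
  Matrix.fromBlocks
    (opToMat (adjoint Φ₁ ∘L B ∘L Φ₁)) (opToMat (adjoint Φ₁ ∘L B ∘L Φ₂))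
    (opToMat (adjoint Φ₂ ∘L B ∘L Φ₁)) (opToMat (adjoint Φ₂ ∘L B ∘L Φ₂))

/-- The frame `𝔄(S,z) = I_{2p} - i z Π^* (I - z A^*)⁻¹ S⁻¹ Π J` of an `S`-node,
identified with a `2p × 2p` complex matrix. -/
def frameS {p : ℕ} {H : Type*} [NormedAddCommGroup H] [InnerProductSpace ℂ H]
    [CompleteSpace H] (A S : H →L[ℂ] H) (Φ₁ Φ₂ : EuclideanSpace ℂ (Fin p) →L[ℂ] H)
    (z : ℂ) : Matrix (Fin p ⊕ Fin p) (Fin p ⊕ Fin p) ℂ :=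
  1 - (Complex.I * z) •
    (sandwich (Ring.inverse (1 - z • adjoint A) ∘L Ring.inverse S) Φ₁ Φ₂ *
      Matrix.fromBlocks 0 1 1 0)

/-- The `p × p` matrix `ρ(z,w) = i (w - z) Φ₂^* (I - z A^*)⁻¹ S⁻¹ (I - w A)⁻¹ Φ₂`. -/
def rhoS {p : ℕ} {H : Type*} [NormedAddCommGroup H] [InnerProductSpace ℂ H]
    [CompleteSpace H] (A S : H →L[ℂ] H) (Φ₂ : EuclideanSpace ℂ (Fin p) →L[ℂ] H)
    (z w : ℂ) : Matrix (Fin p) (Fin p) ℂ :=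
  (Complex.I * (w - z)) • opToMat (adjoint Φ₂ ∘L Ring.inverse (1 - z • adjoint A) ∘L
    Ring.inverse S ∘L Ring.inverse (1 - w • A) ∘L Φ₂)

/-! With `P = i z (1 - z A^*)⁻¹ S⁻¹` and `Q = i z S⁻¹ (1 - z A)⁻¹` one has
`𝔄(S,z) = 1 - Π^* P Π J` and `J 𝔄(S, z̄)^* J = 1 + Π^* Q Π J`, whose product is
`1 + Π^* (Q - P - P Π J Π^* Q) Π J`. Conjugating the node identity `A S - S A^* = i Π J Π^*` by
`S⁻¹`, and then by the two resolvents, gives exactly `Q - P = P Π J Π^* Q`. So `J 𝔄(S, z̄)^* J`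
is a right inverse of the square matrix `𝔄(S,z)`, hence its inverse. -/

section RingIdentities

variable {R : Type*} [Ring R]

theorem Ring.inverse_mul_sub_mul_inverse {S : R} (hS : IsUnit S) (a b : R) :
    Ring.inverse S * a - b * Ring.inverse S =
      Ring.inverse S * (a * S - S * b) * Ring.inverse S := by
  have hsS := Ring.inverse_mul_cancel S hS
  have hSs := Ring.mul_inverse_cancel S hS
  calc Ring.inverse S * a - b * Ring.inverse S
      = Ring.inverse S * a * (S * Ring.inverse S) - (Ring.inverse S * S) * b * Ring.inverse S := by
        rw [hsS, hSs, mul_one, one_mul]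
    _ = _ := by noncomm_ring

theorem Ring.mul_inverse_sub_inverse_mul {u v s k : R} (hu : IsUnit u) (hv : IsUnit v)
    (h : u * s - s * v = s * k * s) :
    s * Ring.inverse v - Ring.inverse u * s =
      Ring.inverse u * s * k * s * Ring.inverse v := by
  have hru := Ring.inverse_mul_cancel u hu
  have hvl := Ring.mul_inverse_cancel v hv
  calc s * Ring.inverse v - Ring.inverse u * s
      = (Ring.inverse u * u) * s * Ring.inverse v - Ring.inverse u * s * (v * Ring.inverse v) := by
        rw [hru, hvl, one_mul, mul_one]
    _ = Ring.inverse u * (u * s - s * v) * Ring.inverse v := by noncomm_ring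
    _ = _ := by rw [h]; noncomm_ring

theorem node_resolvent_identity [Algebra ℂ R] {A A' S K : R}
    (hnode : A * S - S * A' = Complex.I • K) (hS : IsUnit S) {z : ℂ}
    (hu : IsUnit (1 - z • A')) (hv : IsUnit (1 - z • A)) :
    (Complex.I * z) • (Ring.inverse S * Ring.inverse (1 - z • A)) -
        (Complex.I * z) • (Ring.inverse (1 - z • A') * Ring.inverse S) =
      (Complex.I * z) • (Ring.inverse (1 - z • A') * Ring.inverse S) * K *
        ((Complex.I * z) • (Ring.inverse S * Ring.inverse (1 - z • A))) := by
  have hshift : (1 - z • A') * Ring.inverse S - Ring.inverse S * (1 - z • A) =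
      Ring.inverse S * ((Complex.I * z) • K) * Ring.inverse S := by
    calc (1 - z • A') * Ring.inverse S - Ring.inverse S * (1 - z • A)
        = z • (Ring.inverse S * A - A' * Ring.inverse S) := by
          simp only [sub_mul, mul_sub, one_mul, mul_one, smul_mul_assoc, mul_smul_comm, smul_sub]
          abel
      _ = _ := by
          rw [Ring.inverse_mul_sub_mul_inverse hS, hnode, mul_comm Complex.I z, ← smul_smul]
          simp only [smul_mul_assoc, mul_smul_comm]
  rw [← smul_sub, Ring.mul_inverse_sub_inverse_mul hu hv hshift]
  simp only [smul_mul_assoc, mul_smul_comm, smul_smul, mul_assoc]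

theorem one_sub_mul_mul_one_add_mul {x y j : R} (h : y - x = x * j * y) :
    (1 - x * j) * (1 + y * j) = 1 := by
  calc (1 - x * j) * (1 + y * j) = 1 + (y - x - x * j * y) * j := by noncomm_ring
    _ = 1 := by rw [h, sub_self, zero_mul, add_zero]

end RingIdentities

section Sandwich

variable {p : ℕ} {H : Type*} [NormedAddCommGroup H] [InnerProductSpace ℂ H] [CompleteSpace H]
  (Φ₁ Φ₂ : EuclideanSpace ℂ (Fin p) →L[ℂ] H)

local notation "𝐉" => (fromBlocks 0 1 1 0 : Matrix (Fin p ⊕ Fin p) (Fin p ⊕ Fin p) ℂ)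

theorem fromBlocks_zero_one_one_zero_mul_self : 𝐉 * 𝐉 = 1 := by
  simp [fromBlocks_multiply, fromBlocks_one]

theorem conjTranspose_fromBlocks_zero_one_one_zero : 𝐉ᴴ = 𝐉 := by
  simp [fromBlocks_conjTranspose]

theorem opToMat_mul (T U : EuclideanSpace ℂ (Fin p) →L[ℂ] EuclideanSpace ℂ (Fin p)) :
    opToMat (T * U) = opToMat T * opToMat U :=
  map_mul _ T U

theorem opToMat_adjoint (T : EuclideanSpace ℂ (Fin p) →L[ℂ] EuclideanSpace ℂ (Fin p)) :
    opToMat (adjoint T) = (opToMat T)ᴴ := by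
  rw [← star_eq_adjoint, ← star_eq_conjTranspose]
  exact (toEuclideanCLM (𝕜 := ℂ) (n := Fin p)).symm.map_star' T

theorem sandwich_smul (c : ℂ) (B : H →L[ℂ] H) :
    sandwich (c • B) Φ₁ Φ₂ = c • sandwich B Φ₁ Φ₂ := by
  simp only [sandwich, comp_smul, smul_comp, opToMat, map_smul, fromBlocks_smul]

theorem sandwich_sub (B B' : H →L[ℂ] H) :
    sandwich (B - B') Φ₁ Φ₂ = sandwich B Φ₁ Φ₂ - sandwich B' Φ₁ Φ₂ := by
  simp only [sandwich, comp_sub, sub_comp, opToMat, map_sub]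
  rw [sub_eq_add_neg (fromBlocks _ _ _ _), fromBlocks_neg, fromBlocks_add]
  simp only [sub_eq_add_neg]

theorem conjTranspose_sandwich (B : H →L[ℂ] H) :
    (sandwich B Φ₁ Φ₂)ᴴ = sandwich (adjoint B) Φ₁ Φ₂ := by
  simp only [sandwich, fromBlocks_conjTranspose, ← opToMat_adjoint, adjoint_comp, adjoint_adjoint,
    comp_assoc]

theorem sandwich_mul_mul_sandwich (B B' : H →L[ℂ] H)
    :
    sandwich B Φ₁ Φ₂ * 𝐉 * sandwich B' Φ₁ Φ₂ =
      sandwich (B * (Φ₁ ∘L adjoint Φ₂ + Φ₂ ∘L adjoint Φ₁) * B') Φ₁ Φ₂ := by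
  have hblock : ∀ Ψ Ψ' : EuclideanSpace ℂ (Fin p) →L[ℂ] H,
      opToMat (adjoint Ψ ∘L B ∘L Φ₂) * opToMat (adjoint Φ₁ ∘L B' ∘L Ψ') +
          opToMat (adjoint Ψ ∘L B ∘L Φ₁) * opToMat (adjoint Φ₂ ∘L B' ∘L Ψ') =
        opToMat (adjoint Ψ ∘L (B * (Φ₁ ∘L adjoint Φ₂ + Φ₂ ∘L adjoint Φ₁) * B') ∘L Ψ') := by
    intro Ψ Ψ'
    rw [← opToMat_mul, ← opToMat_mul, opToMat, opToMat, opToMat, ← map_add]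
    congr 1
    simp only [mul_def, add_comp, comp_add, comp_assoc]
    abel
  simp only [sandwich, fromBlocks_multiply, Matrix.mul_zero, Matrix.mul_one,
    zero_add, add_zero, hblock]

variable (A : H →L[ℂ] H)

theorem frameS_eq_one_sub_sandwich_mul (S : H →L[ℂ] H) (z : ℂ) :
    frameS A S Φ₁ Φ₂ z =
      1 - sandwich ((Complex.I * z) •
        (Ring.inverse (1 - z • adjoint A) * Ring.inverse S)) Φ₁ Φ₂ * 𝐉 := by
  rw [frameS, sandwich_smul, smul_mul_assoc]
  rfl

theorem star_one_sub_conj_smul_adjoint (z : ℂ) :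
    star (1 - starRingEnd ℂ z • adjoint A) = 1 - z • A := by
  rw [star_sub, star_one, star_smul, star_eq_adjoint, adjoint_adjoint, Complex.star_def,
    Complex.conj_conj]

theorem fromBlocks_mul_conjTranspose_frameS_conj_mul {S : H →L[ℂ] H} (hS : IsSelfAdjoint S)
    (z : ℂ) :
    𝐉 * (frameS A S Φ₁ Φ₂ (starRingEnd ℂ z))ᴴ * 𝐉 =
      1 + sandwich ((Complex.I * z) •
        (Ring.inverse S * Ring.inverse (1 - z • A))) Φ₁ Φ₂ * 𝐉 := by
  have hadj : adjoint ((Complex.I * starRingEnd ℂ z) •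
        (Ring.inverse (1 - starRingEnd ℂ z • adjoint A) * Ring.inverse S)) =
      -((Complex.I * z) • (Ring.inverse S * Ring.inverse (1 - z • A))) := by
    rw [← star_eq_adjoint, star_smul, star_mul', star_mul, ← Ring.inverse_star,
      ← Ring.inverse_star, hS.star_eq, star_one_sub_conj_smul_adjoint, Complex.star_def,
      Complex.conj_I, Complex.conj_conj, neg_mul, neg_smul]
  rw [frameS_eq_one_sub_sandwich_mul, conjTranspose_sub, conjTranspose_one, conjTranspose_mul,
    conjTranspose_fromBlocks_zero_one_one_zero, conjTranspose_sandwich, hadj,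
    ← neg_one_smul ℂ, sandwich_smul, neg_one_smul, Matrix.mul_neg, sub_neg_eq_add,
    Matrix.mul_add, Matrix.add_mul, Matrix.mul_one, fromBlocks_zero_one_one_zero_mul_self,
    ← Matrix.mul_assoc, fromBlocks_zero_one_one_zero_mul_self, Matrix.one_mul]

end Sandwich

theorem frame_inverse_formula_general
    {p : ℕ} {H : Type*} [NormedAddCommGroup H] [InnerProductSpace ℂ H]
    [CompleteSpace H] (A S : H →L[ℂ] H) (Φ₁ Φ₂ : EuclideanSpace ℂ (Fin p) →L[ℂ] H)
    (hS : IsSelfAdjoint S)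
    (hnode : A ∘L S - S ∘L adjoint A =
      Complex.I • (Φ₁ ∘L adjoint Φ₂ + Φ₂ ∘L adjoint Φ₁))
    (hSinv : IsUnit S) (z : ℂ)
    (hz : IsUnit ((1 : H →L[ℂ] H) - z • adjoint A))
    (hz' : IsUnit ((1 : H →L[ℂ] H) - (starRingEnd ℂ z) • adjoint A)) :
    IsUnit (frameS A S Φ₁ Φ₂ z) ∧
      (frameS A S Φ₁ Φ₂ z)⁻¹ =
        Matrix.fromBlocks 0 1 1 0 * (frameS A S Φ₁ Φ₂ (starRingEnd ℂ z))ᴴ *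
          Matrix.fromBlocks 0 1 1 0 := by
  have hzA : IsUnit (1 - z • A) := star_one_sub_conj_smul_adjoint A z ▸ hz'.star
  have hright : frameS A S Φ₁ Φ₂ z *
      (fromBlocks 0 1 1 0 * (frameS A S Φ₁ Φ₂ (starRingEnd ℂ z))ᴴ * fromBlocks 0 1 1 0) = 1 := by
    rw [fromBlocks_mul_conjTranspose_frameS_conj_mul Φ₁ Φ₂ A hS, frameS_eq_one_sub_sandwich_mul]
    refine one_sub_mul_mul_one_add_mul ?_
    rw [← sandwich_sub, node_resolvent_identity hnode hSinv hz hzA, sandwich_mul_mul_sandwich]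
  exact ⟨.of_mul_eq_one _ hright, inv_eq_right_inv hright⟩

/-- the frame is invertible and `𝔄(S,z)⁻¹ = J 𝔄(S, conj z)^* J`. -/
theorem frame_inverse_formula
    {p : ℕ} (hp : 1 ≤ p) {H : Type*} [NormedAddCommGroup H] [InnerProductSpace ℂ H]
    [CompleteSpace H] (A S : H →L[ℂ] H) (Φ₁ Φ₂ : EuclideanSpace ℂ (Fin p) →L[ℂ] H)
    (hS : IsSelfAdjoint S)
    (hnode : A ∘L S - S ∘L adjoint A =
      Complex.I • (Φ₁ ∘L adjoint Φ₂ + Φ₂ ∘L adjoint Φ₁))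
    (hSinv : IsUnit S) (z : ℂ)
    (hz : IsUnit ((1 : H →L[ℂ] H) - z • adjoint A))
    (hz' : IsUnit ((1 : H →L[ℂ] H) - (starRingEnd ℂ z) • adjoint A)) :
    IsUnit (frameS A S Φ₁ Φ₂ z) ∧
      (frameS A S Φ₁ Φ₂ z)⁻¹ =
        Matrix.fromBlocks 0 1 1 0 * (frameS A S Φ₁ Φ₂ (starRingEnd ℂ z))ᴴ *
          Matrix.fromBlocks 0 1 1 0 :=
  frame_inverse_formula_general A S Φ₁ Φ₂ hS hnode hSinv z hz hz'
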